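/- Let {z_n} be a sequence of complex numbers with lim_{n→∞} z_n = z, where Re z > −1. Then lim_{p→0⁺} Σ_{n=1}^∞ (1−p)^{n−1} p · e^{−p n z_n} = 1/(1+z); in particular, for each sufficiently small p ∈ (0,1) the series converges absolutely. -/

import Mathlib

/-!
For a constant sequence `z_n = L` the series is geometric, with sum
`p e^{-pL} / (1 - (1 - p) e^{-pL})`; its denominator is `(1 + L) p + o(p)`, so the sum tends to
`1 / (1 + L)`. In general fix `c < 1` with `-c < Re L`. For large `n` both exponents lie in the
half-plane `Re ≤ p n c`, where `exp` is `e^{p n c}`-Lipschitz, so the `n`-th terms for `z` and for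
`L` differ by at most `|z_n - L|` times a weight whose total mass
`p² e^{pc} / (1 - (1 - p) e^{pc})²` tends to `1 / (1 - c)²`. Hence the tail of the difference
series is uniformly small, while each of the finitely many remaining terms tends to `0` with `p`.
-/

open Filter Set Topology

theorem norm_cexp_sub_cexp_le {a b : ℂ} {C : ℝ} (ha : a.re ≤ C) (hb : b.re ≤ C) :
    ‖Complex.exp a - Complex.exp b‖ ≤ Real.exp C * ‖a - b‖ :=
  Convex.norm_image_sub_le_of_norm_hasDerivWithin_le
    (fun w _ => (Complex.hasDerivAt_exp w).hasDerivWithinAt)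
    (fun w hw => by rw [Complex.norm_exp]; exact Real.exp_le_exp.2 hw)
    (convex_halfSpace_re_le C) hb ha

theorem one_sub_mul_exp_mul_lt_one {p c : ℝ} (hp : 0 < p) (hc : c < 1) :
    (1 - p) * Real.exp (p * c) < 1 :=
  calc (1 - p) * Real.exp (p * c) < Real.exp (-p) * Real.exp (p * c) := by
        gcongr; linarith [Real.add_one_lt_exp (neg_ne_zero.2 hp.ne')]
    _ = Real.exp (p * (c - 1)) := by rw [← Real.exp_add]; ring_nf
    _ < 1 := Real.exp_lt_one_iff.2 (mul_neg_of_pos_of_neg hp (by linarith))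

theorem re_neg_ofReal_mul_le {x c : ℝ} {w : ℂ} (hx : 0 ≤ x) (hw : -c ≤ w.re) :
    (-(x : ℂ) * w).re ≤ x * c := by
  rw [← Complex.ofReal_neg, Complex.re_ofReal_mul]
  nlinarith

theorem exp_mul_succ_mul (p c : ℝ) (n : ℕ) :
    Real.exp (p * (n + 1) * c) = Real.exp (p * c) * Real.exp (p * c) ^ n := by
  rw [← pow_succ', ← Real.exp_nat_mul]
  push_cast
  ring_nf

theorem tendsto_tsum_zero_of_tail_le {α E : Type*} [NormedAddCommGroup E] [CompleteSpace E]
    {l : Filter α} {d : α → ℕ → E} (hd : ∀ n, Tendsto (fun a => d a n) l (𝓝 0))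
    (htail : ∀ ε > 0, ∃ N, ∀ᶠ a in l, Summable (fun n => ‖d a n‖) ∧ ∑' n, ‖d a (n + N)‖ ≤ ε) :
    Tendsto (fun a => ∑' n, d a n) l (𝓝 0) := by
  refine NormedAddGroup.tendsto_nhds_zero.2 fun ε hε => ?_
  obtain ⟨N, hN⟩ := htail (ε / 2) (half_pos hε)
  have hhead : Tendsto (fun a => ∑ n ∈ Finset.range N, d a n) l (𝓝 0) := by
    simpa using tendsto_finsetSum (Finset.range N) fun n _ => hd n
  filter_upwards [hN, NormedAddGroup.tendsto_nhds_zero.1 hhead (ε / 2) (half_pos hε)]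
    with a ⟨hsum, htail⟩ hhead
  rw [← hsum.of_norm.sum_add_tsum_nat_add N]
  calc ‖∑ n ∈ Finset.range N, d a n + ∑' n, d a (n + N)‖
      ≤ ‖∑ n ∈ Finset.range N, d a n‖ + ‖∑' n, d a (n + N)‖ := norm_add_le _ _
    _ ≤ ‖∑ n ∈ Finset.range N, d a n‖ + ∑' n, ‖d a (n + N)‖ := by
        gcongr
        exact norm_tsum_le_tsum_norm ((summable_nat_add_iff N).2 hsum)
    _ < ε := by linarith

noncomputable def geomExpTerm (z : ℕ → ℂ) (p : ℝ) (n : ℕ) : ℂ :=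
  ((1 - p : ℝ) : ℂ) ^ n * (p : ℂ) * Complex.exp (-(p * (n + 1) : ℝ) * z (n + 1))

noncomputable def geomWeight (c p : ℝ) (n : ℕ) : ℝ :=
  p ^ 2 * Real.exp (p * c) * ((n + 1) * ((1 - p) * Real.exp (p * c)) ^ n)

section

variable {z w : ℕ → ℂ} {p c : ℝ}

theorem norm_geomExpTerm_le (hp0 : 0 ≤ p) (hp1 : p ≤ 1) {n : ℕ} (hz : -c ≤ (z (n + 1)).re) :
    ‖geomExpTerm z p n‖ ≤ p * Real.exp (p * c) * ((1 - p) * Real.exp (p * c)) ^ n := by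
  rw [geomExpTerm, norm_mul, norm_mul, norm_pow, Complex.norm_real, Complex.norm_real,
    Real.norm_of_nonneg (sub_nonneg.2 hp1), Real.norm_of_nonneg hp0, Complex.norm_exp]
  calc (1 - p) ^ n * p * Real.exp (-((p * (n + 1) : ℝ) : ℂ) * z (n + 1)).re
      ≤ (1 - p) ^ n * p * Real.exp (p * (n + 1) * c) := by
        have := sub_nonneg.2 hp1
        gcongr
        exact re_neg_ofReal_mul_le (by positivity) hz
    _ = p * Real.exp (p * c) * ((1 - p) * Real.exp (p * c)) ^ n := by
        rw [exp_mul_succ_mul, mul_pow]; ring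

theorem norm_geomExpTerm_sub_le (hp0 : 0 ≤ p) (hp1 : p ≤ 1) {n : ℕ}
    (hz : -c ≤ (z (n + 1)).re) (hw : -c ≤ (w (n + 1)).re) :
    ‖geomExpTerm z p n - geomExpTerm w p n‖ ≤ ‖z (n + 1) - w (n + 1)‖ * geomWeight c p n := by
  set x : ℝ := p * (n + 1)
  have hx : 0 ≤ x := by positivity
  have hexp := norm_cexp_sub_cexp_le (re_neg_ofReal_mul_le hx hz) (re_neg_ofReal_mul_le hx hw)
  rw [← mul_sub, norm_mul, norm_neg, Complex.norm_real, Real.norm_of_nonneg hx] at hexp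
  rw [geomExpTerm, geomExpTerm, ← mul_sub, norm_mul, norm_mul, norm_pow, Complex.norm_real,
    Complex.norm_real, Real.norm_of_nonneg (sub_nonneg.2 hp1), Real.norm_of_nonneg hp0]
  calc (1 - p) ^ n * p * ‖Complex.exp _ - Complex.exp _‖
      ≤ (1 - p) ^ n * p * (Real.exp (x * c) * (x * ‖z (n + 1) - w (n + 1)‖)) := by
        have := sub_nonneg.2 hp1
        gcongr
    _ = ‖z (n + 1) - w (n + 1)‖ * geomWeight c p n := by
        rw [geomWeight, exp_mul_succ_mul, mul_pow]; ring

theorem summable_norm_geomExpTerm (hc : c < 1) (hp0 : 0 < p) (hp1 : p ≤ 1)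
    (hz : ∀ᶠ n in atTop, -c ≤ (z n).re) : Summable fun n => ‖geomExpTerm z p n‖ := by
  have hr0 : 0 ≤ (1 - p) * Real.exp (p * c) := by
    have := sub_nonneg.2 hp1
    positivity
  refine .of_norm_bounded_eventually_nat
    ((summable_geometric_of_lt_one hr0 (one_sub_mul_exp_mul_lt_one hp0 hc)).mul_left
      (p * Real.exp (p * c))) ?_
  filter_upwards [(tendsto_add_atTop_nat 1).eventually hz] with n hn
  rw [norm_norm]
  exact norm_geomExpTerm_le hp0.le hp1 hn

theorem hasSum_geomWeight (hc : c < 1) (hp0 : 0 < p) (hp1 : p ≤ 1) :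
    HasSum (geomWeight c p)
      (p ^ 2 * Real.exp (p * c) / (1 - (1 - p) * Real.exp (p * c)) ^ 2) := by
  have hr0 : 0 ≤ (1 - p) * Real.exp (p * c) := by
    have := sub_nonneg.2 hp1
    positivity
  have hr : ‖(1 - p) * Real.exp (p * c)‖ < 1 := by
    rw [Real.norm_of_nonneg hr0]
    exact one_sub_mul_exp_mul_lt_one hp0 hc
  rw [div_eq_mul_one_div]
  refine ((hasSum_choose_mul_geometric_of_norm_lt_one 1 hr).mul_left _).congr_fun fun n => ?_
  simp [geomWeight, mul_assoc]

theorem hasSum_geomExpTerm_const {L : ℂ} (hL : -1 < L.re) (hp0 : 0 < p) (hp1 : p ≤ 1) :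
    HasSum (geomExpTerm (fun _ => L) p)
      (p * Complex.exp (-p * L) / (1 - ((1 - p : ℝ) : ℂ) * Complex.exp (-p * L))) := by
  have hq : ‖((1 - p : ℝ) : ℂ) * Complex.exp (-p * L)‖ < 1 := by
    rw [norm_mul, Complex.norm_real, Real.norm_of_nonneg (sub_nonneg.2 hp1), Complex.norm_exp,
      ← Complex.ofReal_neg, Complex.re_ofReal_mul, neg_mul, ← mul_neg]
    exact one_sub_mul_exp_mul_lt_one hp0 (by linarith)
  rw [div_eq_mul_inv]
  refine ((hasSum_geometric_of_norm_lt_one hq).mul_left _).congr_fun fun n => ?_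
  have hexp : Complex.exp (-((p * (n + 1) : ℝ) : ℂ) * L)
      = Complex.exp (-p * L) * Complex.exp (n * (-p * L)) := by
    rw [← Complex.exp_add]; push_cast; ring_nf
  rw [geomExpTerm, mul_pow, ← Complex.exp_nat_mul, hexp]
  ring

theorem tendsto_geomExpTerm_zero (z : ℕ → ℂ) (n : ℕ) :
    Tendsto (fun p : ℝ => geomExpTerm z p n) (𝓝[>] 0) (𝓝 0) := by
  have : Continuous fun p : ℝ => geomExpTerm z p n := by unfold geomExpTerm; fun_prop
  simpa [geomExpTerm] using (this.tendsto 0).mono_left nhdsWithin_le_nhds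

end

theorem tendsto_one_sub_mul_cexp_div (L : ℂ) :
    Tendsto (fun p : ℝ => (1 - ((1 - p : ℝ) : ℂ) * Complex.exp (-p * L)) / p) (𝓝[>] 0)
      (𝓝 (1 + L)) := by
  have hq : HasDerivAt (fun p : ℝ => ((1 - p : ℝ) : ℂ)) (-1) 0 := by
    simpa using ((hasDerivAt_id (0 : ℝ)).const_sub 1).ofReal_comp
  have he : HasDerivAt (fun p : ℝ => Complex.exp (-p * L)) (-L) 0 := by
    simpa using ((hasDerivAt_id (0 : ℝ)).ofReal_comp.neg.mul_const L).cexp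
  have hf := (hq.mul he).const_sub 1
  convert hf.tendsto_slope_zero_right using 2 with p
  · simp [div_eq_inv_mul]
  · simp; ring

theorem tendsto_one_sub_mul_exp_div (c : ℝ) :
    Tendsto (fun p : ℝ => (1 - (1 - p) * Real.exp (p * c)) / p) (𝓝[>] 0) (𝓝 (1 - c)) := by
  have hf := (((hasDerivAt_id (0 : ℝ)).const_sub 1).mul
    ((hasDerivAt_id (0 : ℝ)).mul_const c).exp).const_sub 1
  convert hf.tendsto_slope_zero_right using 2 with p
  · simp [div_eq_inv_mul]
  · simp; ring

theorem tendsto_tsum_geomExpTerm_const {L : ℂ} (hL : -1 < L.re) :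
    Tendsto (fun p : ℝ => ∑' n, geomExpTerm (fun _ => L) p n) (𝓝[>] 0) (𝓝 (1 / (1 + L))) := by
  have h1L : 1 + L ≠ 0 := fun h => by
    have := congrArg Complex.re h
    simp only [Complex.add_re, Complex.one_re, Complex.zero_re] at this
    linarith
  have hexp : Tendsto (fun p : ℝ => Complex.exp (-p * L)) (𝓝[>] 0) (𝓝 1) := by
    have : Continuous fun p : ℝ => Complex.exp (-p * L) := by fun_prop
    simpa using (this.tendsto 0).mono_left nhdsWithin_le_nhds
  refine (hexp.div (tendsto_one_sub_mul_cexp_div L) h1L).congr' ?_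
  filter_upwards [Ioo_mem_nhdsGT one_pos] with p hp
  rw [Pi.div_apply, (hasSum_geomExpTerm_const hL hp.1 hp.2.le).tsum_eq, div_div_eq_mul_div,
    mul_comm]

theorem tendsto_tsum_geomWeight {c : ℝ} (hc : c < 1) :
    Tendsto (fun p : ℝ => ∑' n, geomWeight c p n) (𝓝[>] 0) (𝓝 (1 / (1 - c) ^ 2)) := by
  have hexp : Tendsto (fun p : ℝ => Real.exp (p * c)) (𝓝[>] 0) (𝓝 1) := by
    have : Continuous fun p : ℝ => Real.exp (p * c) := by fun_prop
    simpa using (this.tendsto 0).mono_left nhdsWithin_le_nhds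
  refine (hexp.div ((tendsto_one_sub_mul_exp_div c).pow 2)
    (pow_ne_zero 2 (sub_ne_zero.2 hc.ne'))).congr' ?_
  filter_upwards [Ioo_mem_nhdsGT one_pos] with p hp
  rw [Pi.div_apply, (hasSum_geomWeight hc hp.1 hp.2.le).tsum_eq, div_pow, div_div_eq_mul_div,
    mul_comm]

theorem tendsto_tsum_geomExpTerm_sub {z w : ℕ → ℂ} {c : ℝ} (hc : c < 1)
    (hz : ∀ᶠ n in atTop, -c ≤ (z n).re) (hw : ∀ᶠ n in atTop, -c ≤ (w n).re)
    (hzw : Tendsto (fun n => z n - w n) atTop (𝓝 0)) :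
    Tendsto (fun p : ℝ => ∑' n, (geomExpTerm z p n - geomExpTerm w p n)) (𝓝[>] 0) (𝓝 0) := by
  refine tendsto_tsum_zero_of_tail_le
    (fun n => by simpa using (tendsto_geomExpTerm_zero z n).sub (tendsto_geomExpTerm_zero w n))
    fun ε hε => ?_
  set K : ℝ := 1 / (1 - c) ^ 2 + 1
  have hK : 0 < K := by positivity
  obtain ⟨N, hN⟩ := eventually_atTop.1 ((tendsto_add_atTop_nat 1).eventually
    (hz.and (hw.and (NormedAddGroup.tendsto_nhds_zero.1 hzw (ε / K) (by positivity)))))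
  refine ⟨N, ?_⟩
  filter_upwards [(tendsto_tsum_geomWeight hc).eventually_lt_const (lt_add_one _),
    Ioo_mem_nhdsGT one_pos] with p hmass ⟨hp0, hp1⟩
  have hweight := hasSum_geomWeight hc hp0 hp1.le
  have hweight_nonneg : ∀ n, 0 ≤ geomWeight c p n := fun n => by
    have := sub_nonneg.2 hp1.le
    unfold geomWeight
    positivity
  have hsum : Summable fun n => ‖geomExpTerm z p n - geomExpTerm w p n‖ :=
    ((summable_norm_geomExpTerm hc hp0 hp1.le hz).add
      (summable_norm_geomExpTerm hc hp0 hp1.le hw)).of_nonneg_of_le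
      (fun _ => norm_nonneg _) fun _ => norm_sub_le _ _
  refine ⟨hsum, ?_⟩
  calc ∑' n, ‖geomExpTerm z p (n + N) - geomExpTerm w p (n + N)‖
      ≤ ∑' n, ε / K * geomWeight c p (n + N) := by
        refine Summable.tsum_le_tsum (fun n => ?_) ((summable_nat_add_iff N).2 hsum)
          (((summable_nat_add_iff N).2 hweight.summable).mul_left _)
        obtain ⟨hzn, hwn, hzwn⟩ := hN (n + N) (Nat.le_add_left N n)
        refine (norm_geomExpTerm_sub_le hp0.le hp1.le hzn hwn).trans ?_
        gcongr
        exact hweight_nonneg _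
    _ ≤ ε / K * ∑' n, geomWeight c p n := by
        rw [tsum_mul_left]
        exact mul_le_mul_of_nonneg_left
          (tsum_comp_le_tsum_of_inj hweight.summable hweight_nonneg (add_left_injective N))
          (by positivity)
    _ ≤ ε := by
        rw [div_mul_eq_mul_div, div_le_iff₀ hK]
        gcongr

/-- Lemma A.3 of the paper.  Let `z n` (for `n = 1, 2, ...`, here written
`z (n+1)` with `n : ℕ`) be complex numbers converging to `L` with `Re L > −1`.  Then the series
`∑_{n=1}^∞ (1−p)^{n−1} p e^{−p n z_n}` converges absolutely for every sufficiently small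
`p > 0`, and it tends to `1/(1+L)` as `p → 0⁺`. -/
theorem stmt_10 (z : ℕ → ℂ) (L : ℂ) (hz : Tendsto z atTop (nhds L)) (hL : -1 < L.re) :
    (∀ᶠ p : ℝ in nhdsWithin 0 (Set.Ioi 0),
      Summable (fun n : ℕ =>
        ‖((1 - p : ℝ) : ℂ) ^ n * (p : ℂ) *
          Complex.exp (-(p * (n + 1) : ℝ) * z (n + 1))‖)) ∧
    Tendsto
      (fun p : ℝ => ∑' n : ℕ,
        ((1 - p : ℝ) : ℂ) ^ n * (p : ℂ) * Complex.exp (-(p * (n + 1) : ℝ) * z (n + 1)))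
      (nhdsWithin 0 (Set.Ioi 0)) (nhds (1 / (1 + L))) := by
  obtain ⟨c, hc, hcL⟩ : ∃ c < 1, -c < L.re := ⟨(1 - L.re) / 2, by linarith, by linarith⟩
  have hz_re : ∀ᶠ n in atTop, -c ≤ (z n).re :=
    ((Complex.continuous_re.tendsto L).comp hz).eventually (eventually_ge_nhds hcL)
  have hL_re : ∀ᶠ n : ℕ in atTop, -c ≤ ((fun _ => L) n).re := .of_forall fun _ => hcL.le
  have hsum : ∀ᶠ p in 𝓝[>] (0 : ℝ), Summable fun n => ‖geomExpTerm z p n‖ := by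
    filter_upwards [Ioo_mem_nhdsGT one_pos] with p hp
    exact summable_norm_geomExpTerm hc hp.1 hp.2.le hz_re
  refine ⟨hsum, ?_⟩
  have hdiff := tendsto_tsum_geomExpTerm_sub hc hz_re hL_re (tendsto_sub_nhds_zero_iff.2 hz)
  rw [← add_zero (1 / (1 + L))]
  refine ((tendsto_tsum_geomExpTerm_const hL).add hdiff).congr' ?_
  filter_upwards [hsum, Ioo_mem_nhdsGT one_pos] with p hzp hp
  have hLp := (hasSum_geomExpTerm_const hL hp.1 hp.2.le).summable
  rw [← hLp.tsum_add (hzp.of_norm.sub hLp)]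
  exact tsum_congr fun n => add_sub_cancel _ _
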